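/- Let L, K be positive integers, let π*, π'* ∈ Δ^{L-1} (open simplex), let φ* be an L×K matrix whose rows lie in the open simplex Δ^{K-1} with rank L, and let 0 < ρ₁ ≤ ρ₂. For weight data (b, d, ρ) with b an L×K matrix of nonnegative reals summing to 1, d ∈ Δ̄^{K-1}, and ρ ∈ [ρ₁, ρ₂], define H_{b,d,ρ}(π, π', φ) = Σ_{l,k} b_{lk} log(π_l φ_{lk}) + ρ Σ_k d_k log(Σ_l π'_l φ_{lk}) on Θ = Δ̄^{L-1} × Δ̄^{L-1} × (Δ̄^{K-1})^L, with values in [−∞, ∞) under the convention log 0 = −∞. Then for every ε > 0 there exists η > 0 such that for all (b, d, ρ) with max_{l,k} |b_{lk} − π*_l φ*_{lk}| < η, max_k |d_k − (φ*^T π'*)_k| < η, and ρ ∈ [ρ₁, ρ₂], every maximizer (π̂, π̂', φ̂) of H_{b,d,ρ} over Θ satisfies ‖(π̂, π̂', φ̂) − (π*, π'*, φ*)‖ < ε. -/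

import Mathlib

/-!
At the population weights `b* = (π*_l φ*_{lk})` and `d* = φ*ᵀπ'*` the objective splits into a
joint cross-entropy `∑ b*_{lk} log (π_l φ_{lk})` and a mixture cross-entropy
`∑ d*_k log (φᵀπ')_k`. Gibbs' inequality bounds each by its value at `θ* = (π*, π'*, φ*)`, with
equality only if `π_l φ_{lk} = b*_{lk}` and `φᵀπ' = d*`; these force `π = π*`, `φ = φ*` and, since
`φ*` has rank `L`, `π' = π'*`. So `θ*` is the unique maximizer for every `ρ > 0`.

With `log 0 = -∞` the objective is a continuous `EReal`-valued function of `(b, d, ρ, θ)` wherever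
the weights are positive. On the compact set of pairs `(ρ, θ)` with `ρ ∈ [ρ₁, ρ₂]` and `θ ∈ Θ` at
distance at least `ε` from `θ*`, the strict inequality `H(θ) < H(θ*)` therefore persists for all
weights close to `(b*, d*)`, so no such `θ` is a maximizer.
-/

open Finset

/-- The open simplex: vectors with strictly positive entries summing to 1. -/
def openSimplex {n : ℕ} (v : Fin n → ℝ) : Prop :=
  (∀ i, 0 < v i) ∧ ∑ i, v i = 1

/-- The closed simplex: vectors with nonnegative entries summing to 1. -/
def closedSimplex {n : ℕ} (v : Fin n → ℝ) : Prop :=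
  (∀ i, 0 ≤ v i) ∧ ∑ i, v i = 1

/-- Extended-real logarithm with the convention `log 0 = -∞`. -/
noncomputable def elog (x : ℝ) : EReal :=
  if x = 0 then ⊥ else ((Real.log x : ℝ) : EReal)

/-- The parameter space `Θ = Δ̄^{L-1} × Δ̄^{L-1} × (Δ̄^{K-1})^L`. -/
def paramSpace (L K : ℕ) :
    Set ((Fin L → ℝ) × (Fin L → ℝ) × (Fin L → Fin K → ℝ)) :=
  {θ | closedSimplex θ.1 ∧ closedSimplex θ.2.1 ∧ ∀ l, closedSimplex (θ.2.2 l)}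

/-- The weighted objective
`H_{b,d,ρ}(π, π', φ) = Σ_{l,k} b_{lk} log(π_l φ_{lk}) + ρ Σ_k d_k log(Σ_l π'_l φ_{lk})`,
valued in the extended reals with `log 0 = -∞`. -/
noncomputable def weightedObjective (L K : ℕ)
    (b : Fin L → Fin K → ℝ) (d : Fin K → ℝ) (ρ : ℝ)
    (θ : (Fin L → ℝ) × (Fin L → ℝ) × (Fin L → Fin K → ℝ)) : EReal :=
  (∑ l, ∑ k, ((b l k : ℝ) : EReal) * elog (θ.1 l * θ.2.2 l k)) +
  ((ρ : ℝ) : EReal) * ∑ k, ((d k : ℝ) : EReal) * elog (∑ l, θ.2.1 l * θ.2.2 l k)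

open Topology

lemma elog_ne_top (x : ℝ) : elog x ≠ ⊤ := by
  unfold elog; split <;> simp

lemma elog_of_pos {x : ℝ} (hx : 0 < x) : elog x = Real.log x := if_neg hx.ne'

-- `log 0 = -∞` is the continuous extension of `x ↦ log |x|`, which is what `Real.log` computes.
lemma elog_eq_log_ofReal_abs (x : ℝ) : elog x = ENNReal.log (ENNReal.ofReal |x|) := by
  rcases eq_or_ne x 0 with rfl | hx
  · simp [elog]
  · simp [elog, hx, Real.log_abs]

lemma continuous_elog : Continuous elog := by
  simp only [funext elog_eq_log_ofReal_abs]
  exact ENNReal.continuous_log.comp (ENNReal.continuous_ofReal.comp continuous_abs)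

lemma EReal.coe_finsetSum {ι : Type*} (s : Finset ι) (f : ι → ℝ) :
    ((∑ i ∈ s, f i : ℝ) : EReal) = ∑ i ∈ s, (f i : EReal) :=
  map_sum (⟨⟨Real.toEReal, EReal.coe_zero⟩, EReal.coe_add⟩ : ℝ →+ EReal) f s

lemma EReal.coe_mul_ne_top {c : ℝ} {x : EReal} (hc : 0 ≤ c) (hx : x ≠ ⊤) : (c : EReal) * x ≠ ⊤ :=
  (EReal.mul_ne_top _ _).2
    ⟨Or.inl (EReal.coe_ne_bot c), Or.inl (EReal.coe_nonneg.2 hc), Or.inl (EReal.coe_ne_top c),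
      Or.inr hx⟩

lemma EReal.sum_ne_top {ι : Type*} {s : Finset ι} {f : ι → EReal} (h : ∀ i ∈ s, f i ≠ ⊤) :
    ∑ i ∈ s, f i ≠ ⊤ :=
  Finset.sum_induction f (· ≠ ⊤) (fun _ _ => EReal.add_ne_top) EReal.zero_ne_top h

lemma EReal.add_coe_mul_lt_add_coe_mul {a b : EReal} {a' b' c : ℝ} (hc : 0 < c)
    (ha : a ≤ a') (hb : b ≤ b') (h : a < a' ∨ b < b') : a + c * b < a' + c * b' := by
  induction a using EReal.rec with
  | bot => simpa using EReal.bot_lt_coe (a' + c * b')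
  | top => simp at ha
  | coe a =>
    induction b using EReal.rec with
    | bot => simpa [EReal.coe_mul_bot_of_pos hc] using EReal.bot_lt_coe (a' + c * b')
    | top => simp at hb
    | coe b =>
      norm_cast at *
      rcases h with h | h <;> nlinarith

lemma mul_log_lt_mul_log_add_sub {p q : ℝ} (hp : 0 < p) (hq : 0 < q) (hne : q ≠ p) :
    p * Real.log q < p * Real.log p + (q - p) := by
  have hlog := Real.log_lt_sub_one_of_pos (div_pos hq hp) (by rwa [Ne, div_eq_one_iff_eq hp.ne'])
  rw [Real.log_div hq.ne' hp.ne'] at hlog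
  have := mul_lt_mul_of_pos_left hlog hp
  rw [mul_sub, mul_sub, mul_div_cancel₀ _ hp.ne'] at this
  linarith

lemma mul_log_le_mul_log_add_sub {p q : ℝ} (hp : 0 < p) (hq : 0 < q) :
    p * Real.log q ≤ p * Real.log p + (q - p) := by
  rcases eq_or_ne q p with rfl | hne
  · simp
  · exact (mul_log_lt_mul_log_add_sub hp hq hne).le

section Gibbs

variable {ι : Type*} [Fintype ι] {p q : ι → ℝ}

lemma sum_mul_log_lt_sum_mul_log (hp : ∀ i, 0 < p i) (hq : ∀ i, 0 < q i)
    (hs : ∑ i, q i ≤ ∑ i, p i) (hne : q ≠ p) :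
    ∑ i, p i * Real.log (q i) < ∑ i, p i * Real.log (p i) := by
  obtain ⟨i, hi⟩ := Function.ne_iff.1 hne
  calc ∑ i, p i * Real.log (q i)
      < ∑ i, (p i * Real.log (p i) + (q i - p i)) :=
        Finset.sum_lt_sum (fun j _ => mul_log_le_mul_log_add_sub (hp j) (hq j))
          ⟨i, Finset.mem_univ i, mul_log_lt_mul_log_add_sub (hp i) (hq i) hi⟩
    _ = ∑ i, p i * Real.log (p i) + (∑ i, q i - ∑ i, p i) := by
        rw [Finset.sum_add_distrib, Finset.sum_sub_distrib]
    _ ≤ ∑ i, p i * Real.log (p i) := by linarith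

lemma sum_coe_mul_elog_of_pos (hq : ∀ i, 0 < q i) :
    ∑ i, (p i : EReal) * elog (q i) = ((∑ i, p i * Real.log (q i) : ℝ) : EReal) := by
  rw [EReal.coe_finsetSum]
  exact Finset.sum_congr rfl fun i _ => by rw [elog_of_pos (hq i), EReal.coe_mul]

lemma sum_coe_mul_elog_lt (hp : ∀ i, 0 < p i) (hq : ∀ i, 0 ≤ q i) (hs : ∑ i, q i ≤ ∑ i, p i)
    (hne : q ≠ p) :
    ∑ i, (p i : EReal) * elog (q i) < ((∑ i, p i * Real.log (p i) : ℝ) : EReal) := by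
  classical
  by_cases hq' : ∀ i, 0 < q i
  · rw [sum_coe_mul_elog_of_pos hq']
    exact EReal.coe_lt_coe_iff.2 (sum_mul_log_lt_sum_mul_log hp hq' hs hne)
  · obtain ⟨i, hi⟩ := not_forall.1 hq'
    have hzero : q i = 0 := le_antisymm (not_lt.1 hi) (hq i)
    rw [← Finset.add_sum_erase _ _ (Finset.mem_univ i), hzero, elog, if_pos rfl,
      EReal.coe_mul_bot_of_pos (hp i), EReal.bot_add]
    exact EReal.bot_lt_coe _

lemma sum_coe_mul_elog_le (hp : ∀ i, 0 < p i) (hq : ∀ i, 0 ≤ q i) (hs : ∑ i, q i ≤ ∑ i, p i) :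
    ∑ i, (p i : EReal) * elog (q i) ≤ ((∑ i, p i * Real.log (p i) : ℝ) : EReal) := by
  rcases eq_or_ne q p with rfl | hne
  · exact (sum_coe_mul_elog_of_pos hp).le
  · exact (sum_coe_mul_elog_lt hp hq hs hne).le

end Gibbs

lemma openSimplex.closedSimplex {n : ℕ} {v : Fin n → ℝ} (hv : openSimplex v) : closedSimplex v :=
  ⟨fun i => (hv.1 i).le, hv.2⟩

lemma openSimplex.sum_mul_pos {n m : ℕ} {v : Fin n → ℝ} (hv : openSimplex v)
    {A : Fin n → Fin m → ℝ} (hA : ∀ i j, 0 < A i j) (j : Fin m) : 0 < ∑ i, A i j * v i :=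
  Finset.sum_pos (fun i _ => mul_pos (hA i j) (hv.1 i))
    (Finset.nonempty_of_sum_ne_zero (hv.2.symm ▸ one_ne_zero))

lemma sum_sum_mul_eq_one {L K : ℕ} {u : Fin L → ℝ} {v : Fin L → Fin K → ℝ} (hu : ∑ l, u l = 1)
    (hv : ∀ l, ∑ k, v l k = 1) : ∑ l, ∑ k, u l * v l k = 1 := by
  simp_rw [← Finset.mul_sum, hv, mul_one, hu]

lemma sum_sum_mul_eq_one' {L K : ℕ} {u : Fin L → ℝ} {v : Fin L → Fin K → ℝ}
    (hu : ∑ l, u l = 1) (hv : ∀ l, ∑ k, v l k = 1) : ∑ k, ∑ l, u l * v l k = 1 := by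
  rw [Finset.sum_comm]
  exact sum_sum_mul_eq_one hu hv

lemma Matrix.vecMul_injective_of_rank_eq_card {m n R : Type*} [Fintype m] [Fintype n] [Field R]
    {A : Matrix m n R} (h : A.rank = Fintype.card m) : Function.Injective A.vecMul := by
  rw [Matrix.vecMul_injective_iff, linearIndependent_iff_card_eq_finrank_span, ← h,
    Matrix.rank_eq_finrank_span_row, Set.finrank]

lemma eq_of_joint_eq_of_mixture_eq {L K : ℕ} {πstar π'star : Fin L → ℝ}
    {φstar : Fin L → Fin K → ℝ} (hπ : ∀ l, 0 < πstar l) (hφ : ∀ l, ∑ k, φstar l k = 1)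
    (hrank : (Matrix.of φstar).rank = L) {π π' : Fin L → ℝ} {φ : Fin L → Fin K → ℝ}
    (hφrows : ∀ l, ∑ k, φ l k = 1) (hjoint : ∀ l k, π l * φ l k = πstar l * φstar l k)
    (hmixture : ∀ k, ∑ l, π' l * φ l k = ∑ l, φstar l k * π'star l) :
    (π, π', φ) = (πstar, π'star, φstar) := by
  have hπ_eq (l : Fin L) : π l = πstar l := by
    simpa [← Finset.mul_sum, hφrows, hφ] using
      Finset.sum_congr rfl fun k (_ : k ∈ Finset.univ) => hjoint l k
  have hφ_eq : φ = φstar := funext fun l => funext fun k =>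
    mul_left_cancel₀ (hπ l).ne' (by rw [← hjoint l k, hπ_eq l])
  subst hφ_eq
  have hπ'_eq : π' = π'star := by
    refine Matrix.vecMul_injective_of_rank_eq_card (by rwa [Fintype.card_fin]) (funext fun k => ?_)
    simpa [Matrix.vecMul, dotProduct, mul_comm] using hmixture k
  rw [funext hπ_eq, hπ'_eq]

lemma weightedObjective_lt_of_ne {L K : ℕ} {πstar π'star : Fin L → ℝ}
    {φstar : Fin L → Fin K → ℝ} (hπ : openSimplex πstar) (hπ' : openSimplex π'star)
    (hφ : ∀ l, openSimplex (φstar l)) (hrank : (Matrix.of φstar).rank = L) {ρ : ℝ} (hρ : 0 < ρ)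
    {θ : (Fin L → ℝ) × (Fin L → ℝ) × (Fin L → Fin K → ℝ)} (hθ : θ ∈ paramSpace L K)
    (hne : θ ≠ (πstar, π'star, φstar)) :
    weightedObjective L K (fun l k => πstar l * φstar l k) (fun k => ∑ l, φstar l k * π'star l)
        ρ θ <
      weightedObjective L K (fun l k => πstar l * φstar l k)
        (fun k => ∑ l, φstar l k * π'star l) ρ (πstar, π'star, φstar) := by
  obtain ⟨π, π', φ⟩ := θ
  obtain ⟨hπθ, hπ'θ, hφθ⟩ := hθ
  set p₁ : Fin L × Fin K → ℝ := fun x => πstar x.1 * φstar x.1 x.2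
  set q₁ : Fin L × Fin K → ℝ := fun x => π x.1 * φ x.1 x.2
  set p₂ : Fin K → ℝ := fun k => ∑ l, φstar l k * π'star l
  set q₂ : Fin K → ℝ := fun k => ∑ l, π' l * φ l k
  have hp₁ (x : Fin L × Fin K) : 0 < p₁ x := mul_pos (hπ.1 x.1) ((hφ x.1).1 x.2)
  have hp₂ : ∀ k, 0 < p₂ k := hπ'.sum_mul_pos fun l => (hφ l).1
  have hq₁ (x : Fin L × Fin K) : 0 ≤ q₁ x := mul_nonneg (hπθ.1 x.1) ((hφθ x.1).1 x.2)
  have hq₂ (k : Fin K) : 0 ≤ q₂ k :=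
    Finset.sum_nonneg fun l _ => mul_nonneg (hπ'θ.1 l) ((hφθ l).1 k)
  have hs₁ : ∑ x, q₁ x ≤ ∑ x, p₁ x := by
    simp only [p₁, q₁, Fintype.sum_prod_type, sum_sum_mul_eq_one hπθ.2 fun l => (hφθ l).2,
      sum_sum_mul_eq_one hπ.2 fun l => (hφ l).2, le_refl]
  have hs₂ : ∑ k, q₂ k ≤ ∑ k, p₂ k := by
    simp only [p₂, q₂, mul_comm (φstar _ _), sum_sum_mul_eq_one' hπ'θ.2 fun l => (hφθ l).2,
      sum_sum_mul_eq_one' hπ'.2 fun l => (hφ l).2, le_refl]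
  have hident : q₁ ≠ p₁ ∨ q₂ ≠ p₂ := by
    by_contra! h
    exact hne (eq_of_joint_eq_of_mixture_eq hπ.1 (fun l => (hφ l).2) hrank (fun l => (hφθ l).2)
      (fun l k => congrFun h.1 (l, k)) (congrFun h.2))
  have hstar : weightedObjective L K (fun l k => πstar l * φstar l k)
      (fun k => ∑ l, φstar l k * π'star l) ρ (πstar, π'star, φstar) =
      ((∑ x, p₁ x * Real.log (p₁ x) : ℝ) : EReal) +
        ρ * ((∑ k, p₂ k * Real.log (p₂ k) : ℝ) : EReal) := by
    rw [← sum_coe_mul_elog_of_pos hp₁, ← sum_coe_mul_elog_of_pos hp₂, weightedObjective,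
      Fintype.sum_prod_type]
    simp only [p₁, p₂, mul_comm (π'star _)]
  rw [hstar, weightedObjective, ← Fintype.sum_prod_type' (f := fun l k => _ * elog (q₁ (l, k)))]
  exact EReal.add_coe_mul_lt_add_coe_mul hρ (sum_coe_mul_elog_le hp₁ hq₁ hs₁)
    (sum_coe_mul_elog_le hp₂ hq₂ hs₂)
    (hident.imp (sum_coe_mul_elog_lt hp₁ hq₁ hs₁) (sum_coe_mul_elog_lt hp₂ hq₂ hs₂))

section Continuity

variable {X : Type*} [TopologicalSpace X] {x : X}

lemma ContinuousAt.ereal_add {f g : X → EReal} (hf : ContinuousAt f x) (hg : ContinuousAt g x)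
    (hfx : f x ≠ ⊤) (hgx : g x ≠ ⊤) : ContinuousAt (fun y => f y + g y) x :=
  ContinuousAt.comp (f := fun y => (f y, g y))
    (EReal.continuousAt_add (p := (f x, g x)) (Or.inl hfx) (Or.inr hgx)) (hf.prodMk hg)

lemma ContinuousAt.ereal_sum {ι : Type*} {s : Finset ι} {f : ι → X → EReal}
    (hf : ∀ i ∈ s, ContinuousAt (f i) x) (hfx : ∀ i ∈ s, f i x ≠ ⊤) :
    ContinuousAt (fun y => ∑ i ∈ s, f i y) x := by
  induction s using Finset.cons_induction with
  | empty => simpa using continuousAt_const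
  | cons i s hi ih =>
    simp only [Finset.sum_cons]
    rw [Finset.forall_mem_cons] at hf hfx
    exact hf.1.ereal_add (ih hf.2 hfx.2) hfx.1 (EReal.sum_ne_top hfx.2)

lemma ContinuousAt.coe_mul_ereal {f : X → ℝ} {g : X → EReal} (hf : ContinuousAt f x)
    (hg : ContinuousAt g x) (hfx : f x ≠ 0) : ContinuousAt (fun y => (f y : EReal) * g y) x :=
  ContinuousAt.comp (f := fun y => ((f y : EReal), g y))
    (EReal.continuousAt_mul (p := ((f x : EReal), g x)) (Or.inl (EReal.coe_ne_zero.2 hfx))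
      (Or.inl (EReal.coe_ne_zero.2 hfx)) (Or.inl (EReal.coe_ne_bot _))
      (Or.inl (EReal.coe_ne_top _)))
    ((continuous_coe_real_ereal.continuousAt.comp hf).prodMk hg)

lemma continuousAt_coe_mul_elog {c f : X → ℝ} (hc : ContinuousAt c x) (hf : ContinuousAt f x)
    (hcx : 0 < c x) : ContinuousAt (fun y => (c y : EReal) * elog (f y)) x :=
  hc.coe_mul_ereal (continuous_elog.continuousAt.comp hf) hcx.ne'

lemma continuousAt_weightedObjective {L K : ℕ} {b : X → Fin L → Fin K → ℝ} {d : X → Fin K → ℝ}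
    {ρ : X → ℝ} {θ : X → (Fin L → ℝ) × (Fin L → ℝ) × (Fin L → Fin K → ℝ)}
    (hb : ContinuousAt b x) (hd : ContinuousAt d x) (hρ : ContinuousAt ρ x)
    (hθ : ContinuousAt θ x) (hbx : ∀ l k, 0 < b x l k) (hdx : ∀ k, 0 < d x k) (hρx : 0 < ρ x) :
    ContinuousAt (fun y => weightedObjective L K (b y) (d y) (ρ y) (θ y)) x := by
  have hjoint (l : Fin L) (k : Fin K) :
      ContinuousAt (fun y => (b y l k : EReal) * elog ((θ y).1 l * (θ y).2.2 l k)) x :=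
    continuousAt_coe_mul_elog (tendsto_pi_nhds.1 (tendsto_pi_nhds.1 hb l) k) (by fun_prop) (hbx l k)
  have hmixture (k : Fin K) :
      ContinuousAt (fun y => (d y k : EReal) * elog (∑ l, (θ y).2.1 l * (θ y).2.2 l k)) x :=
    continuousAt_coe_mul_elog (tendsto_pi_nhds.1 hd k) (by fun_prop) (hdx k)
  have hmixture_ne_top : ∑ k, (d x k : EReal) * elog (∑ l, (θ x).2.1 l * (θ x).2.2 l k) ≠ ⊤ :=
    EReal.sum_ne_top fun k _ => EReal.coe_mul_ne_top (hdx k).le (elog_ne_top _)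
  refine ContinuousAt.ereal_add ?_ ?_ ?_ (EReal.coe_mul_ne_top hρx.le hmixture_ne_top)
  · exact ContinuousAt.ereal_sum (fun l _ => ContinuousAt.ereal_sum (fun k _ => hjoint l k)
      fun k _ => EReal.coe_mul_ne_top (hbx l k).le (elog_ne_top _))
      fun l _ => EReal.sum_ne_top fun k _ => EReal.coe_mul_ne_top (hbx l k).le (elog_ne_top _)
  · exact hρ.coe_mul_ereal (ContinuousAt.ereal_sum (fun k _ => hmixture k)
      fun k _ => EReal.coe_mul_ne_top (hdx k).le (elog_ne_top _)) hρx.ne'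
  · exact EReal.sum_ne_top fun l _ =>
      EReal.sum_ne_top fun k _ => EReal.coe_mul_ne_top (hbx l k).le (elog_ne_top _)

end Continuity

theorem IsCompact.eventually_forall_lt {X Y α : Type*} [TopologicalSpace X] [TopologicalSpace Y]
    [TopologicalSpace α] [LinearOrder α] [OrderClosedTopology α] {f g : X × Y → α} {x₀ : X}
    {K : Set Y} (hK : IsCompact K) (hf : ∀ y ∈ K, ContinuousAt f (x₀, y))
    (hg : ∀ y ∈ K, ContinuousAt g (x₀, y)) (hfg : ∀ y ∈ K, f (x₀, y) < g (x₀, y)) :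
    ∀ᶠ x in 𝓝 x₀, ∀ y ∈ K, f (x, y) < g (x, y) :=
  hK.eventually_forall_of_forall_eventually fun y hy =>
    (hf y hy).eventually_lt (hg y hy) (hfg y hy)

lemma isCompact_paramSpace (L K : ℕ) : IsCompact (paramSpace L K) := by
  have h : paramSpace L K = stdSimplex ℝ (Fin L) ×ˢ
      (stdSimplex ℝ (Fin L) ×ˢ Set.univ.pi fun _ : Fin L => stdSimplex ℝ (Fin K)) := by
    ext ⟨π, π', φ⟩
    simp [paramSpace, closedSimplex, stdSimplex, Set.mem_pi]
  rw [h]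
  exact (isCompact_stdSimplex _ _).prod ((isCompact_stdSimplex _ _).prod
    (isCompact_univ_pi fun _ => isCompact_stdSimplex _ _))

theorem weighted_objective_maximizers_close_general
    (L K : ℕ)
    (πstar π'star : Fin L → ℝ) (φstar : Fin L → Fin K → ℝ)
    (hπ : openSimplex πstar) (hπ' : openSimplex π'star)
    (hφ : ∀ l, openSimplex (φstar l))
    (hrank : (Matrix.of φstar).rank = L)
    (ρ₁ ρ₂ : ℝ) (hρ₁ : 0 < ρ₁) :
    ∀ ε > 0, ∃ η > 0,
      ∀ (b : Fin L → Fin K → ℝ) (d : Fin K → ℝ) (ρ : ℝ),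
        (∀ l k, 0 ≤ b l k) → (∑ l, ∑ k, b l k = 1) → closedSimplex d →
        ρ₁ ≤ ρ → ρ ≤ ρ₂ →
        (∀ l k, |b l k - πstar l * φstar l k| < η) →
        (∀ k, |d k - ∑ l, φstar l k * π'star l| < η) →
        ∀ θhat ∈ paramSpace L K,
          (∀ θ ∈ paramSpace L K,
            weightedObjective L K b d ρ θ ≤ weightedObjective L K b d ρ θhat) →
          dist θhat (πstar, π'star, φstar) < ε := by
  intro ε hε
  set θstar := (πstar, π'star, φstar)
  set w₀ : (Fin L → Fin K → ℝ) × (Fin K → ℝ) :=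
    (fun l k => πstar l * φstar l k, fun k => ∑ l, φstar l k * π'star l)
  have hw₀ : (∀ l k, 0 < w₀.1 l k) ∧ ∀ k, 0 < w₀.2 k :=
    ⟨fun l k => mul_pos (hπ.1 l) ((hφ l).1 k), hπ'.sum_mul_pos fun l => (hφ l).1⟩
  set far := Set.Icc ρ₁ ρ₂ ×ˢ (paramSpace L K \ Metric.ball θstar ε)
  have hfar : IsCompact far :=
    isCompact_Icc.prod ((isCompact_paramSpace L K).diff Metric.isOpen_ball)
  have hunique : ∀ y ∈ far,
      weightedObjective L K w₀.1 w₀.2 y.1 y.2 < weightedObjective L K w₀.1 w₀.2 y.1 θstar :=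
    fun y hy => weightedObjective_lt_of_ne hπ hπ' hφ hrank (hρ₁.trans_le hy.1.1) hy.2.1
      fun h => hy.2.2 (by rw [h]; exact Metric.mem_ball_self hε)
  have hcont (θ : _ × ℝ × _ → (Fin L → ℝ) × (Fin L → ℝ) × (Fin L → Fin K → ℝ))
      (hθ : Continuous θ) (y) (hy : y ∈ far) :
      ContinuousAt (fun z => weightedObjective L K z.1.1 z.1.2 z.2.1 (θ z)) (w₀, y) :=
    continuousAt_weightedObjective (by fun_prop) (by fun_prop) (by fun_prop) hθ.continuousAt
      hw₀.1 hw₀.2 (hρ₁.trans_le hy.1.1)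
  have hstable := hfar.eventually_forall_lt (x₀ := w₀) (hcont (fun z => z.2.2) (by fun_prop))
    (hcont (fun _ => θstar) (by fun_prop)) hunique
  obtain ⟨η, hη, hball⟩ := Metric.eventually_nhds_iff.1 hstable
  refine ⟨η, hη, fun b d ρ _ _ _ hρ₁ρ hρρ₂ hb hd θhat hθhat hmax => ?_⟩
  have hw : dist (b, d) w₀ < η := by
    simpa [Prod.dist_eq, dist_pi_lt_iff hη, Real.dist_eq] using And.intro hb hd
  by_contra hfar'
  exact (hball hw (ρ, θhat) ⟨⟨hρ₁ρ, hρρ₂⟩, hθhat, hfar'⟩).not_ge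
    (hmax θstar ⟨hπ.closedSimplex, hπ'.closedSimplex, fun l => (hφ l).closedSimplex⟩)

/-- Uniformly over weights `(b, d, ρ)` sufficiently close to the population
weights `(π*_l φ*_{lk}, (φ*ᵀ π'*)_k)` with `ρ ∈ [ρ₁, ρ₂]`, every maximizer of `H_{b,d,ρ}`
over `Θ` lies within `ε` of `(π*, π'*, φ*)`. -/
theorem weighted_objective_maximizers_close
    (L K : ℕ) (hL : 0 < L) (hK : 0 < K)
    (πstar π'star : Fin L → ℝ) (φstar : Fin L → Fin K → ℝ)
    (hπ : openSimplex πstar) (hπ' : openSimplex π'star)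
    (hφ : ∀ l, openSimplex (φstar l))
    (hrank : (Matrix.of φstar).rank = L)
    (ρ₁ ρ₂ : ℝ) (hρ₁ : 0 < ρ₁) (hρ₁₂ : ρ₁ ≤ ρ₂) :
    ∀ ε > 0, ∃ η > 0,
      ∀ (b : Fin L → Fin K → ℝ) (d : Fin K → ℝ) (ρ : ℝ),
        (∀ l k, 0 ≤ b l k) → (∑ l, ∑ k, b l k = 1) → closedSimplex d →
        ρ₁ ≤ ρ → ρ ≤ ρ₂ →
        (∀ l k, |b l k - πstar l * φstar l k| < η) →
        (∀ k, |d k - ∑ l, φstar l k * π'star l| < η) →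
        ∀ θhat ∈ paramSpace L K,
          (∀ θ ∈ paramSpace L K,
            weightedObjective L K b d ρ θ ≤ weightedObjective L K b d ρ θhat) →
          dist θhat (πstar, π'star, φstar) < ε :=
  weighted_objective_maximizers_close_general L K πstar π'star φstar hπ hπ' hφ hrank ρ₁ ρ₂ hρ₁
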